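/- arXiv:2406.13318 — 4 statements merged into one kernel-verified Lean document; each statement's English description precedes it below -/
import Mathlib

section
/- Let A ≤ G ≤ B be permutation groups on the same set Ω. If A has an irredundant base of length ℓ_A and B has an irredundant base of length ℓ_B with ℓ_A > ℓ_B, then G is not IBIS (it has two irredundant bases of different lengths). -/
/-- The pointwise stabilizer of a list of points. -/
def ptStab (G : Type*) [Group G] {Ω : Type*} [MulAction G Ω] (l : List Ω) : Subgroup G :=
  ⨅ ω ∈ l, MulAction.stabilizer G ω

/-- A sequence is irredundant if the chain of successive pointwise stabilizers,
starting from the whole group, is strictly decreasing. -/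
def IsIrredundant (G : Type*) [Group G] {Ω : Type*} [MulAction G Ω] (l : List Ω) : Prop :=
  ∀ i, i < l.length → ptStab G (l.take (i + 1)) < ptStab G (l.take i)

/-- An irredundant base: an irredundant sequence whose pointwise stabilizer is trivial. -/
def IsIrrBase (G : Type*) [Group G] {Ω : Type*} [MulAction G Ω] (l : List Ω) : Prop :=
  IsIrredundant G l ∧ ptStab G l = ⊥

lemma mem_ptStab {G : Type*} [Group G] {Ω : Type*} [MulAction G Ω] {l : List Ω} {g : G} :
    g ∈ ptStab G l ↔ ∀ ω ∈ l, g • ω = ω := by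
  simp [ptStab, Subgroup.mem_iInf, MulAction.mem_stabilizer_iff]

lemma ptStab_le_of_subset {G : Type*} [Group G] {Ω : Type*} [MulAction G Ω]
    {l l' : List Ω} (h : ∀ ω ∈ l, ω ∈ l') : ptStab G l' ≤ ptStab G l := fun g hg =>
  mem_ptStab.2 fun ω hω => mem_ptStab.1 hg ω (h ω hω)

lemma ptStab_take_succ_le {G : Type*} [Group G] {Ω : Type*} [MulAction G Ω] (l : List Ω)
    (i : ℕ) : ptStab G (l.take (i + 1)) ≤ ptStab G (l.take i) :=
  ptStab_le_of_subset fun ω hω => by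
    have : l.take i = (l.take (i + 1)).take i := by
      rw [List.take_take]; congr 1; omega
    rw [this] at hω
    exact List.mem_of_mem_take hω

/-- Any base can be compressed to an irredundant base. -/
lemma compress {G : Type*} [Group G] {Ω : Type*} [MulAction G Ω] :
    ∀ n (l : List Ω), l.length ≤ n → ptStab G l = ⊥ →
      ∃ b : List Ω, IsIrrBase G b ∧ b.length ≤ l.length := by
  intro n
  induction n with
  | zero =>
    intro l hl hbot
    exact ⟨l, ⟨fun i hi => absurd hi (by omega), hbot⟩, le_rfl⟩
  | succ n ih =>
    intro l hl hbot
    by_cases hirr : IsIrredundant G l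
    · exact ⟨l, ⟨hirr, hbot⟩, le_rfl⟩
    · obtain ⟨i, hi, hns⟩ : ∃ i, i < l.length ∧
          ¬ ptStab G (l.take (i + 1)) < ptStab G (l.take i) := by
        by_contra hc; push_neg at hc; exact hirr hc
      have heq : ptStab G (l.take (i + 1)) = ptStab G (l.take i) := by
        by_contra hne
        exact hns (lt_of_le_of_ne (ptStab_take_succ_le l i) hne)
      set l' : List Ω := l.take i ++ l.drop (i + 1) with hl'
      have hlen' : l'.length = l.length - 1 := by
        simp only [hl', List.length_append, List.length_take, List.length_drop]; omega
      have key : ptStab G l' ≤ ptStab G l := by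
        intro g hg
        rw [mem_ptStab] at hg ⊢
        have h1 : ∀ ω ∈ l.take i, g • ω = ω := fun ω hω =>
          hg ω (List.mem_append_left _ hω)
        have h2 : ∀ ω ∈ l.drop (i + 1), g • ω = ω := fun ω hω =>
          hg ω (List.mem_append_right _ hω)
        have h3 : ∀ ω ∈ l.take (i + 1), g • ω = ω := by
          have hmem : g ∈ ptStab G (l.take (i + 1)) := by
            rw [heq]; exact mem_ptStab.2 h1
          exact fun ω hω => mem_ptStab.1 hmem ω hω
        intro ω hω
        rw [← List.take_append_drop (i + 1) l] at hω
        rcases List.mem_append.1 hω with hω | hω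
        · exact h3 ω hω
        · exact h2 ω hω
      have hbot' : ptStab G l' = ⊥ := le_bot_iff.1 (hbot ▸ key)
      obtain ⟨b, hb, hble⟩ := ih l' (by omega) hbot'
      exact ⟨b, hb, by omega⟩

/-- Any irredundant sequence can be extended to an irredundant base. -/
lemma extend {G : Type*} [Group G] [Finite G] {Ω : Type*} [MulAction G Ω] [FaithfulSMul G Ω] :
    ∀ n (l : List Ω), Nat.card (ptStab G l) ≤ n → IsIrredundant G l →
      ∃ b : List Ω, IsIrrBase G b ∧ l.length ≤ b.length := by
  intro n
  induction n with
  | zero =>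
    intro l hc _
    have := Nat.card_pos (α := ptStab G l)
    omega
  | succ n ih =>
    intro l hc hirr
    by_cases hbot : ptStab G l = ⊥
    · exact ⟨l, ⟨hirr, hbot⟩, le_rfl⟩
    · obtain ⟨g, hg1⟩ := Subgroup.ne_bot_iff_exists_ne_one.1 hbot
      obtain ⟨ω, hω⟩ : ∃ ω : Ω, (g : G) • ω ≠ ω := by
        by_contra hcon; push_neg at hcon
        apply hg1
        rw [← OneMemClass.coe_eq_one]
        exact FaithfulSMul.eq_of_smul_eq_smul fun ω => by rw [hcon ω, one_smul]
      set l' : List Ω := l ++ [ω] with hl'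
      have hlt : ptStab G l' < ptStab G l := by
        refine lt_of_le_of_ne (ptStab_le_of_subset fun x hx => List.mem_append_left _ hx) ?_
        intro hEq
        have : (g : G) ∈ ptStab G l' := by rw [hEq]; exact g.2
        exact hω (mem_ptStab.1 this ω (List.mem_append_right _ (List.mem_singleton_self ω)))
      have hirr' : IsIrredundant G l' := by
        intro i hi
        have hi' : i ≤ l.length := by
          simp only [hl', List.length_append, List.length_singleton] at hi; omega
        rcases lt_or_eq_of_le hi' with hlt' | hEq'
        · have t1 : l'.take (i + 1) = l.take (i + 1) :=
            List.take_append_of_le_length (by omega)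
          have t0 : l'.take i = l.take i := List.take_append_of_le_length (by omega)
          rw [t1, t0]; exact hirr i hlt'
        · subst hEq'
          have t1 : l'.take (l.length + 1) = l' := List.take_of_length_le (by simp [hl'])
          have t0 : l'.take l.length = l := by
            rw [List.take_append_of_le_length le_rfl, List.take_length]
          rw [t1, t0]; exact hlt
      have hcard : Nat.card (ptStab G l') < Nat.card (ptStab G l) := by
        have h1 : ((ptStab G l' : Set G)).ncard < ((ptStab G l : Set G)).ncard :=
          Set.ncard_strictMono (SetLike.coe_ssubset_coe.2 hlt)
        rw [← Nat.card_coe_set_eq, ← Nat.card_coe_set_eq] at h1; exact h1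
      obtain ⟨b, hb, hble⟩ := ih l' (by omega) hirr'
      refine ⟨b, hb, le_trans ?_ hble⟩
      simp [hl']

/-- Let `A ≤ G ≤ B` be permutation groups on `Ω`. If `A` has an irredundant base of
length `ℓ_A` and `B` has an irredundant base of length `ℓ_B` with `ℓ_A > ℓ_B`, then `G`
is not IBIS: it has two irredundant bases of different lengths. -/
theorem stmt2 {B Ω : Type*} [Group B] [Finite B] [MulAction B Ω] [FaithfulSMul B Ω]
    (A G : Subgroup B) (hAG : A ≤ G)
    (lA lB : List Ω) (hA : IsIrrBase A lA) (hB : IsIrrBase B lB)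
    (h : lB.length < lA.length) :
    ∃ b b' : List Ω, IsIrrBase G b ∧ IsIrrBase G b' ∧ b.length ≠ b'.length := by
  haveI : FaithfulSMul G Ω :=
    ⟨fun {g₁ g₂} hgg => Subtype.ext (FaithfulSMul.eq_of_smul_eq_smul fun ω : Ω => hgg ω)⟩
  -- lB is a base for G
  have hbotG : ptStab G lB = ⊥ := by
    rw [Subgroup.eq_bot_iff_forall]
    intro g hg
    have hmem : (g : B) ∈ ptStab B lB :=
      mem_ptStab.2 fun ω hω => mem_ptStab.1 hg ω hω
    rw [hB.2, Subgroup.mem_bot] at hmem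
    exact Subtype.ext hmem
  -- lA is irredundant for G
  have hirrG : IsIrredundant G lA := by
    intro i hi
    refine lt_of_le_of_ne (ptStab_take_succ_le _ _) ?_
    intro heq
    have hlt := hA.1 i hi
    apply hlt.ne
    refine le_antisymm (ptStab_take_succ_le _ _) ?_
    intro a ha
    have hgmem : (⟨(a : B), hAG a.2⟩ : G) ∈ ptStab G (lA.take i) :=
      mem_ptStab.2 fun ω hω => mem_ptStab.1 ha ω hω
    rw [← heq] at hgmem
    exact mem_ptStab.2 fun ω hω => mem_ptStab.1 hgmem ω hω
  obtain ⟨b, hb, hble⟩ := compress lB.length lB le_rfl hbotG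
  obtain ⟨b', hb', hb'ge⟩ := extend (Nat.card (ptStab G lA)) lA le_rfl hirrG
  exact ⟨b, b', hb, hb', by omega⟩
end

section
/- Let q be a prime power with q = p^f for a prime p. There exists α ∈ F_{q²} with α + α^q + 1 = 0 such that the orbit of α under the Galois group Gal(F_{q²}/F_p) (a cyclic group of order 2f) has cardinality exactly 2f, i.e., α is not fixed by any nontrivial field automorphism of F_{q²}. -/
open Polynomial

/-- Let `q = p^f` with `p` prime and `F` the field with `q²` elements. There exists
`α ∈ F` with `α + α^q + 1 = 0` whose orbit under the Galois group of `F` over its prime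
field has full cardinality `2f`, i.e. `α` is fixed by no nontrivial field automorphism. -/
theorem stmt5 (p f : ℕ) (hp : p.Prime) (hf : 0 < f) (q : ℕ) (hq : q = p ^ f)
    (F : Type*) [Field F] [Fintype F] (hF : Fintype.card F = q ^ 2) :
    ∃ α : F, α + α ^ q + 1 = 0 ∧
      ∀ σ : F ≃+* F, σ α = α → σ = RingEquiv.refl F := by
  classical
  haveI : Fact p.Prime := ⟨hp⟩
  have hp2 : 2 ≤ p := hp.two_le
  have hq1 : 1 < q := by subst hq; exact Nat.one_lt_pow hf.ne' hp.one_lt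
  have hcardF : Fintype.card F = p ^ (2 * f) := by
    rw [hF, hq, ← pow_mul, mul_comm]
  haveI hcharF : CharP F p := by
    have h := ringChar.charP F
    have hrp : (ringChar F).Prime := CharP.char_is_prime F _
    obtain ⟨n, -, hn⟩ := FiniteField.card F (ringChar F)
    have hrpp : ringChar F = p := by
      have hdvd : ringChar F ∣ p ^ (2 * f) := by
        rw [← hcardF, hn]; exact dvd_pow_self _ n.pos.ne'
      exact (Nat.prime_dvd_prime_iff_eq hrp hp).mp (hrp.dvd_of_dvd_pow hdvd)
    rwa [hrpp] at h
  set g : F[X] := X ^ q + X + 1 with hg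
  -- g divides X^(q^2) - X
  have hdvd : g ∣ X ^ (q ^ 2) - X := by
    have h1 : (X - C (-1) : F[X]) ∣ X ^ q - X := by
      rw [dvd_iff_isRoot]
      simp only [IsRoot, eval_sub, eval_pow, eval_X]
      rcases eq_or_ne p 2 with h2 | h2
      · haveI : CharP F 2 := by rwa [h2] at hcharF
        rw [CharTwo.neg_eq]; simp
      · have hodd : Odd q := by
          subst hq; exact (hp.odd_of_ne_two h2).pow
        rw [hodd.neg_one_pow]; ring
    obtain ⟨c, hc⟩ := h1
    refine ⟨c.comp (X ^ q + X), ?_⟩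
    have e1 : ((X : F[X]) ^ q + X) ^ q = X ^ (q ^ 2) + X ^ q := by
      rw [hq, add_pow_char_pow]; ring
    have e2 := congrArg (fun r : F[X] => r.comp (X ^ q + X)) hc
    simp only [sub_comp, pow_comp, X_comp, mul_comp, C_comp] at e2
    rw [e1] at e2
    simp only [map_neg, map_one] at e2
    rw [hg]
    linear_combination e2
  -- roots of g
  have hbig0 : (X ^ (q ^ 2) - X : F[X]) ≠ 0 :=
    FiniteField.X_pow_card_sub_X_ne_zero F (Nat.one_lt_pow two_ne_zero hq1)
  have hbigroots : (X ^ (q ^ 2) - X : F[X]).roots = Finset.univ.val := by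
    rw [← hF]; exact FiniteField.roots_X_pow_card_sub_X F
  have hbigdeg : (X ^ (q ^ 2) - X : F[X]).natDegree = q ^ 2 :=
    FiniteField.X_pow_card_sub_X_natDegree_eq F (Nat.one_lt_pow two_ne_zero hq1)
  have hsplitsbig : Splits (X ^ (q ^ 2) - X : F[X]) := by
    rw [splits_iff_card_roots, hbigroots, hbigdeg]
    simpa using hF
  have hsplits : Splits g := hsplitsbig.of_dvd hbig0 hdvd
  have hg0 : g ≠ 0 := fun h0 => hbig0 (by
    obtain ⟨c, hc⟩ := hdvd
    rw [hc, h0, zero_mul])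
  have hgdeg : g.natDegree = q := by
    rw [hg]
    compute_degree!
    · rw [if_neg (by omega : ¬(1 : ℕ) = q), if_neg (by omega : ¬q = 0)]
      norm_num
    · omega
  have hgroots_card : Multiset.card g.roots = q := by
    rw [splits_iff_card_roots.mp hsplits, hgdeg]
  have hnodup : g.roots.Nodup := by
    have hle : g.roots ≤ (X ^ (q ^ 2) - X : F[X]).roots := roots.le_of_dvd hbig0 hdvd
    rw [hbigroots] at hle
    exact Multiset.nodup_of_le hle Finset.univ.nodup
  set T : Finset F := g.roots.toFinset with hT
  have hTcard : T.card = q := by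
    rw [hT, Multiset.toFinset_card_eq_card_iff_nodup.mpr hnodup, hgroots_card]
  set m3 := 2 * f / 3 with hm3
  set Bad : Finset F := T.filter
      (fun α => α ^ q = α ∨ ∃ d ∈ Finset.Icc 1 m3, α ^ p ^ d = α) with hBad
  have hTmem : ∀ {α : F}, α ∈ T → α ^ q + α + 1 = 0 := by
    intro α hα
    rw [hT, Multiset.mem_toFinset, mem_roots'] at hα
    have := hα.2
    simp only [hg, IsRoot, eval_add, eval_pow, eval_X, eval_one] at this
    exact this
  -- counting
  have hBadcard : Bad.card < q := by
    have hsub : Bad ⊆ ((C 2 * X + 1 : F[X]).roots).toFinset ∪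
        (Finset.Icc 1 m3).biUnion (fun d => ((X ^ p ^ d - X : F[X]).roots).toFinset) := by
      intro α hα
      simp only [hBad, Finset.mem_filter] at hα
      obtain ⟨hαT, hcases⟩ := hα
      have hαroot : α ^ q + α + 1 = 0 := hTmem hαT
      rcases hcases with h | ⟨d, hd, hroot⟩
      · apply Finset.mem_union_left
        rw [Multiset.mem_toFinset, mem_roots']
        constructor
        · intro h0
          have := congrArg (fun r : F[X] => r.coeff 0) h0
          simp at this
        · simp only [IsRoot, eval_add, eval_mul, eval_C, eval_X, eval_one]
          linear_combination hαroot - h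
      · apply Finset.mem_union_right
        refine Finset.mem_biUnion.mpr ⟨d, hd, ?_⟩
        rw [Multiset.mem_toFinset, mem_roots']
        refine ⟨FiniteField.X_pow_card_sub_X_ne_zero F
          (Nat.one_lt_pow (by have := Finset.mem_Icc.mp hd; omega) hp.one_lt), ?_⟩
        simp [IsRoot, hroot]
    have hm3f : m3 < f := by omega
    calc Bad.card ≤ _ := Finset.card_le_card hsub
      _ ≤ ((C 2 * X + 1 : F[X]).roots).toFinset.card +
          ∑ d ∈ Finset.Icc 1 m3, ((X ^ p ^ d - X : F[X]).roots).toFinset.card :=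
        (Finset.card_union_le _ _).trans
          (add_le_add_right (Finset.card_biUnion_le) _)
      _ ≤ 1 + ∑ d ∈ Finset.Icc 1 m3, p ^ d := by
          gcongr with d hd
          · refine (Multiset.toFinset_card_le _).trans ((card_roots' _).trans ?_)
            compute_degree
          · refine (Multiset.toFinset_card_le _).trans ((card_roots' _).trans ?_)
            compute_degree
            exact max_le le_rfl (Nat.one_le_pow _ _ hp.pos)
      _ = ∑ d ∈ insert 0 (Finset.Icc 1 m3), p ^ d := by
          rw [Finset.sum_insert (by simp)]; simp
      _ < p ^ f := Nat.geomSum_lt hp2 (by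
          intro k hk
          simp only [Finset.mem_insert, Finset.mem_Icc] at hk
          omega)
      _ = q := hq.symm
  have hex : ∃ α ∈ T, α ∉ Bad := by
    by_contra h
    push_neg at h
    have hsub : T ⊆ Bad := fun x hx => h x hx
    have := Finset.card_le_card hsub
    omega
  obtain ⟨α, hαT, hαBad⟩ := hex
  have hαroot : α ^ q + α + 1 = 0 := hTmem hαT
  refine ⟨α, by linear_combination hαroot, ?_⟩
  intro σ hσ
  -- the fixed subfield of σ
  let S : Subfield F :=
    { carrier := {x | σ x = x}
      mul_mem' := fun {a b} ha hb => by
        simp only [Set.mem_setOf_eq, map_mul] at *; rw [ha, hb]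
      one_mem' := by simp
      add_mem' := fun {a b} ha hb => by
        simp only [Set.mem_setOf_eq, map_add] at *; rw [ha, hb]
      zero_mem' := by simp
      neg_mem' := fun {a} ha => by
        simp only [Set.mem_setOf_eq, map_neg] at *; rw [ha]
      inv_mem' := fun a ha => by
        simp only [Set.mem_setOf_eq, map_inv₀] at *; rw [ha] }
  haveI : Fintype S := Fintype.ofFinite S
  haveI : CharP S p := by
    constructor
    intro x
    rw [← CharP.cast_eq_zero_iff F p x, ← map_natCast S.subtype x,
      map_eq_zero_iff _ Subtype.coe_injective]
  obtain ⟨n, -, hcardS⟩ := FiniteField.card S p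
  set d := (n : ℕ) with hdd
  have hd1 : 1 ≤ d := n.property
  set e := Module.finrank S F with he
  have hrank : Fintype.card F = Fintype.card S ^ e := Module.card_eq_pow_finrank
  have h2f : 2 * f = d * e := by
    have hpow : p ^ (2 * f) = p ^ (d * e) := by
      rw [← hcardF, hrank, hcardS, ← pow_mul]
    exact Nat.pow_right_injective hp2 hpow
  by_cases he1 : e = 1
  · -- S = ⊤, σ is the identity
    have hcards : Fintype.card S = Fintype.card F := by
      rw [hcardS, hcardF, h2f, he1, mul_one]
    have hbij : Function.Bijective (fun x : S => (x : F)) :=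
      (Fintype.bijective_iff_injective_and_card _).mpr ⟨Subtype.coe_injective, hcards⟩
    ext x
    obtain ⟨y, rfl⟩ := hbij.surjective x
    exact y.2
  · exfalso
    have he0 : e ≠ 0 := by
      intro h0
      rw [h0, mul_zero] at h2f
      omega
    have he2 : 2 ≤ e := by omega
    have hαS : α ∈ S := hσ
    have hpowα : α ^ p ^ d = α := by
      have hα' := FiniteField.pow_card (⟨α, hαS⟩ : S)
      rw [hcardS] at hα'
      have := congrArg (fun x : S => (x : F)) hα'
      simpa using this
    apply hαBad
    simp only [hBad, Finset.mem_filter]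
    refine ⟨hαT, ?_⟩
    by_cases hdf : d = f
    · left; rw [hq, ← hdf]; exact hpowα
    · right
      refine ⟨d, Finset.mem_Icc.mpr ⟨hd1, ?_⟩, hpowα⟩
      have he3 : 3 ≤ e := by
        rcases Nat.lt_or_ge e 3 with h' | h'
        · interval_cases e; omega
        · exact h'
      have h3d : 3 * d ≤ 2 * f := by
        calc 3 * d ≤ e * d := Nat.mul_le_mul_right d he3
          _ = 2 * f := by rw [h2f, mul_comm]
      omega
end

section
/- Let q = 2^e, V = F_q^{2m} with nondegenerate alternating form φ and quadratic forms θ_a(u) = θ₀(u) + φ(u,a)² as above. For a, c ∈ V, the image of θ_a under the transvection t_c (acting by θ^x(u) = θ(u x^{-1})) equals θ_{a + (√(θ_a(c)) + 1)c}. -/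
open Matrix

variable (F : Type*) [Field F] (m : ℕ)

/-- The matrix `[[0,I],[I,0]]` of the standard symplectic form on `F^{2m}`. -/
def symplMat : Matrix (Fin m ⊕ Fin m) (Fin m ⊕ Fin m) F := Matrix.fromBlocks 0 1 1 0

/-- The matrix `[[0,I],[0,0]]` of the standard quadratic form. -/
def quadMat : Matrix (Fin m ⊕ Fin m) (Fin m ⊕ Fin m) F := Matrix.fromBlocks 0 1 0 0

/-- The alternating bilinear form `φ(u,v) = u f vᵀ`. -/
def sform (u v : Fin m ⊕ Fin m → F) : F := u ⬝ᵥ (symplMat F m).mulVec v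

/-- The quadratic form `θ₀(u) = u e uᵀ`. -/
def theta0 (u : Fin m ⊕ Fin m → F) : F := u ⬝ᵥ (quadMat F m).mulVec u

/-- The quadratic form `θ_a(u) = θ₀(u) + φ(u,a)²`. -/
def thetaA (a u : Fin m ⊕ Fin m → F) : F := theta0 F m u + (sform F m u a) ^ 2

/-- `θ` is a quadratic form polarising to `φ`. -/
def Polarises (θ : (Fin m ⊕ Fin m → F) → F) : Prop :=
  (∀ u v, θ (u + v) - θ u - θ v = sform F m u v) ∧ ∀ (c : F) (u), θ (c • u) = c ^ 2 * θ u

/-- The transvection `t_a : u ↦ u + φ(u,a)a`. -/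
def transv (a u : Fin m ⊕ Fin m → F) : Fin m ⊕ Fin m → F := u + sform F m u a • a

lemma symplMat_symm : (symplMat F m)ᵀ = symplMat F m := by
  simp [symplMat, Matrix.fromBlocks_transpose]

lemma quadMat_add_transpose : quadMat F m + (quadMat F m)ᵀ = symplMat F m := by
  ext (i|i) (j|j) <;> simp [symplMat, quadMat, Matrix.fromBlocks, Matrix.one_apply, eq_comm]

lemma sform_add_left (u v w : Fin m ⊕ Fin m → F) :
    sform F m (u + v) w = sform F m u w + sform F m v w := by
  simp [sform, add_dotProduct]

lemma sform_add_right (u v w : Fin m ⊕ Fin m → F) :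
    sform F m u (v + w) = sform F m u v + sform F m u w := by
  simp [sform, mulVec_add, dotProduct_add]

lemma sform_smul_left (r : F) (u v : Fin m ⊕ Fin m → F) :
    sform F m (r • u) v = r * sform F m u v := by
  simp [sform, smul_dotProduct, smul_eq_mul]

lemma sform_smul_right (r : F) (u v : Fin m ⊕ Fin m → F) :
    sform F m u (r • v) = r * sform F m u v := by
  simp [sform, mulVec_smul, dotProduct_smul, smul_eq_mul]

lemma sform_symm (u v : Fin m ⊕ Fin m → F) : sform F m u v = sform F m v u := by
  rw [sform, dotProduct_mulVec, ← symplMat_symm, vecMul_transpose, dotProduct_comm, sform]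

lemma theta0_add [CharP F 2] (u v : Fin m ⊕ Fin m → F) :
    theta0 F m (u + v) = theta0 F m u + theta0 F m v + sform F m u v := by
  have h : v ⬝ᵥ (quadMat F m).mulVec u = u ⬝ᵥ (quadMat F m)ᵀ.mulVec v := by
    rw [dotProduct_mulVec, mulVec_transpose, dotProduct_comm]
  have h2 : u ⬝ᵥ (quadMat F m).mulVec v + u ⬝ᵥ (quadMat F m)ᵀ.mulVec v = sform F m u v := by
    rw [← dotProduct_add, ← add_mulVec, quadMat_add_transpose, sform]
  simp only [theta0, mulVec_add, dotProduct_add, add_dotProduct]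
  rw [h]
  linear_combination h2

lemma theta0_smul (r : F) (u : Fin m ⊕ Fin m → F) :
    theta0 F m (r • u) = r ^ 2 * theta0 F m u := by
  simp [theta0, mulVec_smul, dotProduct_smul, smul_dotProduct, smul_eq_mul]; ring

/-- For `q = 2^e`, `a, c ∈ V = F_q^{2m}` and `s = √(θ_a(c))`, the image of `θ_a` under
the transvection `t_c` (acting by `θ^x(u) = θ(u x⁻¹)`, and `t_c⁻¹ = t_c`) is
`θ_{a + (√(θ_a(c)) + 1)c}`. -/
theorem stmt10 [Fintype F] [CharP F 2] (e : ℕ) (he : 0 < e)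
    (hcard : Fintype.card F = 2 ^ e) (a c : Fin m ⊕ Fin m → F)
    (s : F) (hs : s ^ 2 = thetaA F m a c) :
    ∀ u, thetaA F m a (transv F m c u) = thetaA F m (a + (s + 1) • c) u := by
  intro u
  have huc : sform F m u c = sform F m c u := sform_symm F m u c
  have hhs := hs
  simp only [thetaA] at hhs
  simp only [thetaA, transv, theta0_add, theta0_smul, sform_add_left, sform_add_right,
    sform_smul_left, sform_smul_right]
  have h2 : (2 : F) = 0 := CharTwo.two_eq_zero
  rw [huc]
  ring_nf
  simp only [h2, mul_zero, zero_mul, add_zero]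
  linear_combination (sform F m c u)^2 * hhs +
    (sform F m c u)^2 * (theta0 F m c + sform F m c a^2 - s^2) * h2
end

section
/- Let G = GL₄(2) act on the set of 2-dimensional subspaces of V = F₂⁴ with basis e₁, e₂, e₃, e₄. Set ω₁ = ⟨e₁,e₂⟩, ω₂ = ⟨e₃,e₄⟩, ω₃ = ⟨e₁+e₃, e₂+e₄⟩, ω₄ = ⟨e₁,e₃⟩, ω₅ = ⟨e₂,e₄⟩ and ω₁' = ⟨e₁,e₂⟩, ω₂' = ⟨e₁,e₃⟩, ω₃' = ⟨e₂,e₄⟩, ω₄' = ⟨e₃,e₄⟩. Then (ω₁,…,ω₅) and (ω₁',…,ω₄') are both irredundant bases for G; in particular G acting on 2-subspaces of F₂⁴ is not IBIS. -/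
open Submodule

/-- The vector space `F₂⁴`. -/
abbrev V16 : Type := Fin 4 → ZMod 2

/-- The standard basis vectors of `F₂⁴`. -/
def e16 (i : Fin 4) : V16 := Pi.single i 1

/-- The pointwise (setwise on subspaces) stabilizer in `GL₄(2)` of a list of subspaces. -/
def stab16 (l : List (Submodule (ZMod 2) V16)) : Set (V16 ≃ₗ[ZMod 2] V16) :=
  {g | ∀ L ∈ l, Submodule.map (g : V16 →ₗ[ZMod 2] V16) L = L}

/-- Irredundance: the chain of stabilizers (starting from all of `GL₄(2)`) strictly
decreases. -/
def Irr16 (l : List (Submodule (ZMod 2) V16)) : Prop :=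
  ∀ i, i < l.length → stab16 (l.take (i + 1)) ⊂ stab16 (l.take i)

/- ### Auxiliary machinery -/

abbrev M4 : Type := Matrix (Fin 4) (Fin 4) (ZMod 2)

/-- Build a linear automorphism from an involutory matrix. -/
def mkInv (M : M4) (h : M * M = 1) : V16 ≃ₗ[ZMod 2] V16 :=
  LinearEquiv.ofLinear M.mulVecLin M.mulVecLin
    (by rw [← Matrix.mulVecLin_mul, h, Matrix.mulVecLin_one])
    (by rw [← Matrix.mulVecLin_mul, h, Matrix.mulVecLin_one])

lemma mkInv_coe (M : M4) (h : M * M = 1) :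
    ((mkInv M h : V16 ≃ₗ[ZMod 2] V16) : V16 →ₗ[ZMod 2] V16) = M.mulVecLin := rfl

lemma map_span_pair (f : V16 →ₗ[ZMod 2] V16) (a b : V16) :
    map f (span (ZMod 2) {a, b}) = span (ZMod 2) {f a, f b} := by
  rw [map_span, Set.image_insert_eq, Set.image_singleton]

lemma span_pair_eq {a b c d : V16}
    (h1 : ∃ m n : ZMod 2, m • c + n • d = a)
    (h2 : ∃ m n : ZMod 2, m • c + n • d = b)
    (h3 : ∃ m n : ZMod 2, m • a + n • b = c)
    (h4 : ∃ m n : ZMod 2, m • a + n • b = d) :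
    span (ZMod 2) {a, b} = span (ZMod 2) {c, d} := by
  refine le_antisymm (span_le.2 ?_) (span_le.2 ?_) <;>
  · rintro x hx
    simp only [Set.mem_insert_iff, Set.mem_singleton_iff] at hx
    rcases hx with rfl | rfl
    · first | exact mem_span_pair.2 h1 | exact mem_span_pair.2 h3
    · first | exact mem_span_pair.2 h2 | exact mem_span_pair.2 h4

lemma span_pair_ne {a b c d : V16} (h : ¬ ∃ m n : ZMod 2, m • c + n • d = a) :
    span (ZMod 2) {a, b} ≠ span (ZMod 2) {c, d} := by
  intro he
  exact h (mem_span_pair.1 (he ▸ subset_span (Set.mem_insert a {b})))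

lemma inf_eq_single {a b c d x : V16}
    (h : ∀ y : V16, ((∃ m n : ZMod 2, m • a + n • b = y) ∧ (∃ m n : ZMod 2, m • c + n • d = y))
      ↔ ∃ m : ZMod 2, m • x = y) :
    span (ZMod 2) {a, b} ⊓ span (ZMod 2) {c, d} = span (ZMod 2) {x} := by
  ext y
  rw [mem_inf, mem_span_pair, mem_span_pair, mem_span_singleton]
  exact h y

lemma mk_map_eq (M : M4) (h : M * M = 1) (a b : V16)
    (h1 : ∃ m n : ZMod 2, m • a + n • b = M.mulVecLin a)
    (h2 : ∃ m n : ZMod 2, m • a + n • b = M.mulVecLin b)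
    (h3 : ∃ m n : ZMod 2, m • M.mulVecLin a + n • M.mulVecLin b = a)
    (h4 : ∃ m n : ZMod 2, m • M.mulVecLin a + n • M.mulVecLin b = b) :
    map ((mkInv M h : V16 ≃ₗ[ZMod 2] V16) : V16 →ₗ[ZMod 2] V16) (span (ZMod 2) {a, b})
      = span (ZMod 2) {a, b} := by
  rw [mkInv_coe, map_span_pair]
  exact span_pair_eq h1 h2 h3 h4

lemma mk_map_ne (M : M4) (h : M * M = 1) (a b : V16)
    (hne : ¬ ∃ m n : ZMod 2, m • a + n • b = M.mulVecLin a) :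
    map ((mkInv M h : V16 ≃ₗ[ZMod 2] V16) : V16 →ₗ[ZMod 2] V16) (span (ZMod 2) {a, b})
      ≠ span (ZMod 2) {a, b} := by
  rw [mkInv_coe, map_span_pair]
  exact span_pair_ne hne

lemma fix_of_span (g : V16 ≃ₗ[ZMod 2] V16) (x : V16) (hx : x ≠ 0)
    (h : map (g : V16 →ₗ[ZMod 2] V16) (span (ZMod 2) {x}) = span (ZMod 2) {x}) :
    g x = x := by
  have hm : g x ∈ span (ZMod 2) {x} := by
    rw [← h]
    exact mem_map_of_mem (subset_span rfl)
  obtain ⟨a, ha⟩ := mem_span_singleton.1 hm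
  have hall : ∀ b : ZMod 2, b = 0 ∨ b = 1 := by decide
  have h01 := hall a
  rcases h01 with rfl | rfl
  · exfalso
    apply hx
    apply g.injective
    rw [← ha]
    simp
  · rw [← ha, one_smul]

/-- Any `g` fixing the four subspaces `⟨e₁,e₂⟩, ⟨e₃,e₄⟩, ⟨e₁,e₃⟩, ⟨e₂,e₄⟩` is the identity. -/
lemma stab_trivial (g : V16 ≃ₗ[ZMod 2] V16)
    (hA : map (g : V16 →ₗ[ZMod 2] V16) (span (ZMod 2) {e16 0, e16 1}) = span (ZMod 2) {e16 0, e16 1})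
    (hB : map (g : V16 →ₗ[ZMod 2] V16) (span (ZMod 2) {e16 2, e16 3}) = span (ZMod 2) {e16 2, e16 3})
    (hD : map (g : V16 →ₗ[ZMod 2] V16) (span (ZMod 2) {e16 0, e16 2}) = span (ZMod 2) {e16 0, e16 2})
    (hE : map (g : V16 →ₗ[ZMod 2] V16) (span (ZMod 2) {e16 1, e16 3}) = span (ZMod 2) {e16 1, e16 3}) :
    g = 1 := by
  have hinj : Function.Injective (g : V16 →ₗ[ZMod 2] V16) := g.injective
  have i0 : span (ZMod 2) {e16 0, e16 1} ⊓ span (ZMod 2) {e16 0, e16 2}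
      = span (ZMod 2) {e16 0} := inf_eq_single (by decide)
  have i1 : span (ZMod 2) {e16 0, e16 1} ⊓ span (ZMod 2) {e16 1, e16 3}
      = span (ZMod 2) {e16 1} := inf_eq_single (by decide)
  have i2 : span (ZMod 2) {e16 2, e16 3} ⊓ span (ZMod 2) {e16 0, e16 2}
      = span (ZMod 2) {e16 2} := inf_eq_single (by decide)
  have i3 : span (ZMod 2) {e16 2, e16 3} ⊓ span (ZMod 2) {e16 1, e16 3}
      = span (ZMod 2) {e16 3} := inf_eq_single (by decide)
  have g0 : g (e16 0) = e16 0 := by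
    refine fix_of_span g _ (by decide) ?_
    rw [← i0, Submodule.map_inf _ hinj, hA, hD]
  have g1 : g (e16 1) = e16 1 := by
    refine fix_of_span g _ (by decide) ?_
    rw [← i1, Submodule.map_inf _ hinj, hA, hE]
  have g2 : g (e16 2) = e16 2 := by
    refine fix_of_span g _ (by decide) ?_
    rw [← i2, Submodule.map_inf _ hinj, hB, hD]
  have g3 : g (e16 3) = e16 3 := by
    refine fix_of_span g _ (by decide) ?_
    rw [← i3, Submodule.map_inf _ hinj, hB, hE]
  apply LinearEquiv.ext
  intro x
  have hx : x = x 0 • e16 0 + x 1 • e16 1 + x 2 • e16 2 + x 3 • e16 3 := by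
    revert x; decide
  conv_lhs => rw [hx]
  rw [map_add, map_add, map_add, map_smul, map_smul, map_smul, map_smul, g0, g1, g2, g3, ← hx]
  rfl

/- Witness matrices (all involutions over `F₂`). -/

def W0 : M4 := !![0,0,1,0; 0,0,0,1; 1,0,0,0; 0,1,0,0]
def W1 : M4 := !![1,0,1,0; 0,1,0,0; 0,0,1,0; 0,0,0,1]
def W2 : M4 := !![0,1,0,0; 1,0,0,0; 0,0,1,0; 0,0,0,1]
def W3 : M4 := !![0,1,0,0; 1,0,0,0; 0,0,0,1; 0,0,1,0]
def W4 : M4 := !![1,1,0,0; 0,1,0,0; 0,0,1,1; 0,0,0,1]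
def U2 : M4 := !![1,1,0,0; 0,1,0,0; 0,0,1,0; 0,0,0,1]
def U3 : M4 := !![1,0,1,0; 0,1,0,1; 0,0,1,0; 0,0,0,1]

lemma W0inv : W0 * W0 = 1 := by decide
lemma W1inv : W1 * W1 = 1 := by decide
lemma W2inv : W2 * W2 = 1 := by decide
lemma W3inv : W3 * W3 = 1 := by decide
lemma W4inv : W4 * W4 = 1 := by decide
lemma U2inv : U2 * U2 = 1 := by decide
lemma U3inv : U3 * U3 = 1 := by decide

lemma one_mem_aux (L : Submodule (ZMod 2) V16) :
    map ((1 : V16 ≃ₗ[ZMod 2] V16) : V16 →ₗ[ZMod 2] V16) L = L := by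
  have : ((1 : V16 ≃ₗ[ZMod 2] V16) : V16 →ₗ[ZMod 2] V16) = LinearMap.id := rfl
  rw [this, Submodule.map_id]

/-- In the action of `GL₄(2)` on the 2-dimensional subspaces of `F₂⁴`, the explicit
sequences `(ω₁,…,ω₅)` and `(ω₁',…,ω₄')` are irredundant bases of lengths 5 and 4
respectively; in particular this action is not IBIS. -/
theorem stmt16 :
    Irr16 [span (ZMod 2) {e16 0, e16 1}, span (ZMod 2) {e16 2, e16 3},
        span (ZMod 2) {e16 0 + e16 2, e16 1 + e16 3}, span (ZMod 2) {e16 0, e16 2},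
        span (ZMod 2) {e16 1, e16 3}] ∧
      stab16 [span (ZMod 2) {e16 0, e16 1}, span (ZMod 2) {e16 2, e16 3},
        span (ZMod 2) {e16 0 + e16 2, e16 1 + e16 3}, span (ZMod 2) {e16 0, e16 2},
        span (ZMod 2) {e16 1, e16 3}] = {1} ∧
      Irr16 [span (ZMod 2) {e16 0, e16 1}, span (ZMod 2) {e16 0, e16 2},
        span (ZMod 2) {e16 1, e16 3}, span (ZMod 2) {e16 2, e16 3}] ∧
      stab16 [span (ZMod 2) {e16 0, e16 1}, span (ZMod 2) {e16 0, e16 2},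
        span (ZMod 2) {e16 1, e16 3}, span (ZMod 2) {e16 2, e16 3}] = {1} := by
  refine ⟨?_, ?_, ?_, ?_⟩
  · -- Irr16 for the length-5 list
    intro i hi
    simp only [List.length_cons, List.length_nil] at hi
    interval_cases i <;>
      simp only [List.take_succ_cons, List.take_zero] <;>
      rw [Set.ssubset_def] <;>
      refine ⟨?_, fun hsub => ?_⟩ <;>
      try (intro g hg L hL
           exact hg L (by revert hL; simp only [List.mem_cons, List.not_mem_nil]; tauto))
    · have hw : mkInv W0 W0inv ∈ stab16 [] := by intro L hL; simp at hL
      have hlast := hsub hw (span (ZMod 2) {e16 0, e16 1}) (by simp)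
      exact mk_map_ne W0 W0inv _ _ (by decide) hlast
    · have hw : mkInv W1 W1inv ∈ stab16 [span (ZMod 2) {e16 0, e16 1}] := by
        intro L hL; fin_cases hL
        exact mk_map_eq W1 W1inv _ _ (by decide) (by decide) (by decide) (by decide)
      have hlast := hsub hw (span (ZMod 2) {e16 2, e16 3}) (by simp)
      exact mk_map_ne W1 W1inv _ _ (by decide) hlast
    · have hw : mkInv W2 W2inv ∈ stab16
          [span (ZMod 2) {e16 0, e16 1}, span (ZMod 2) {e16 2, e16 3}] := by
        intro L hL; fin_cases hL <;>
          exact mk_map_eq W2 W2inv _ _ (by decide) (by decide) (by decide) (by decide)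
      have hlast := hsub hw (span (ZMod 2) {e16 0 + e16 2, e16 1 + e16 3}) (by simp)
      exact mk_map_ne W2 W2inv _ _ (by decide) hlast
    · have hw : mkInv W3 W3inv ∈ stab16
          [span (ZMod 2) {e16 0, e16 1}, span (ZMod 2) {e16 2, e16 3},
            span (ZMod 2) {e16 0 + e16 2, e16 1 + e16 3}] := by
        intro L hL; fin_cases hL <;>
          exact mk_map_eq W3 W3inv _ _ (by decide) (by decide) (by decide) (by decide)
      have hlast := hsub hw (span (ZMod 2) {e16 0, e16 2}) (by simp)
      exact mk_map_ne W3 W3inv _ _ (by decide) hlast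
    · have hw : mkInv W4 W4inv ∈ stab16
          [span (ZMod 2) {e16 0, e16 1}, span (ZMod 2) {e16 2, e16 3},
            span (ZMod 2) {e16 0 + e16 2, e16 1 + e16 3}, span (ZMod 2) {e16 0, e16 2}] := by
        intro L hL; fin_cases hL <;>
          exact mk_map_eq W4 W4inv _ _ (by decide) (by decide) (by decide) (by decide)
      have hlast := hsub hw (span (ZMod 2) {e16 1, e16 3}) (by simp)
      exact mk_map_ne W4 W4inv _ _ (by decide) hlast
  · -- trivial stabilizer for the length-5 list
    ext g
    simp only [stab16, Set.mem_setOf_eq, Set.mem_singleton_iff]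
    constructor
    · intro hg
      exact stab_trivial g (hg _ (by simp)) (hg _ (by simp)) (hg _ (by simp)) (hg _ (by simp))
    · rintro rfl L hL
      exact one_mem_aux L
  · -- Irr16 for the length-4 list
    intro i hi
    simp only [List.length_cons, List.length_nil] at hi
    interval_cases i <;>
      simp only [List.take_succ_cons, List.take_zero] <;>
      rw [Set.ssubset_def] <;>
      refine ⟨?_, fun hsub => ?_⟩ <;>
      try (intro g hg L hL
           exact hg L (by revert hL; simp only [List.mem_cons, List.not_mem_nil]; tauto))
    · have hw : mkInv W0 W0inv ∈ stab16 [] := by intro L hL; simp at hL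
      have hlast := hsub hw (span (ZMod 2) {e16 0, e16 1}) (by simp)
      exact mk_map_ne W0 W0inv _ _ (by decide) hlast
    · have hw : mkInv W2 W2inv ∈ stab16 [span (ZMod 2) {e16 0, e16 1}] := by
        intro L hL; fin_cases hL
        exact mk_map_eq W2 W2inv _ _ (by decide) (by decide) (by decide) (by decide)
      have hlast := hsub hw (span (ZMod 2) {e16 0, e16 2}) (by simp)
      exact mk_map_ne W2 W2inv _ _ (by decide) hlast
    · have hw : mkInv U2 U2inv ∈ stab16
          [span (ZMod 2) {e16 0, e16 1}, span (ZMod 2) {e16 0, e16 2}] := by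
        intro L hL; fin_cases hL <;>
          exact mk_map_eq U2 U2inv _ _ (by decide) (by decide) (by decide) (by decide)
      have hlast := hsub hw (span (ZMod 2) {e16 1, e16 3}) (by simp)
      exact mk_map_ne U2 U2inv _ _ (by decide) hlast
    · have hw : mkInv U3 U3inv ∈ stab16
          [span (ZMod 2) {e16 0, e16 1}, span (ZMod 2) {e16 0, e16 2},
            span (ZMod 2) {e16 1, e16 3}] := by
        intro L hL; fin_cases hL <;>
          exact mk_map_eq U3 U3inv _ _ (by decide) (by decide) (by decide) (by decide)
      have hlast := hsub hw (span (ZMod 2) {e16 2, e16 3}) (by simp)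
      exact mk_map_ne U3 U3inv _ _ (by decide) hlast
  · -- trivial stabilizer for the length-4 list
    ext g
    simp only [stab16, Set.mem_setOf_eq, Set.mem_singleton_iff]
    constructor
    · intro hg
      exact stab_trivial g (hg _ (by simp)) (hg _ (by simp)) (hg _ (by simp)) (hg _ (by simp))
    · rintro rfl L hL
      exact one_mem_aux L
end
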